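/- arXiv:2308.06670 — 6 statements merged into one kernel-verified Lean document; each statement's English description precedes it below -/
import Mathlib

section
/- Let n be a natural number and let G be a simple graph on 2n vertices in which every vertex has degree n−1 and which is not isomorphic to the disjoint union K_n ⊔ K_n. Then G is 2-connected: G is connected, has at least 3 vertices, and the graph obtained by deleting any single vertex of G is connected. -/
open SimpleGraph

/-- The disjoint union of cliques `K_m ⊔ K_n`. -/
def cliqueSum (m n : ℕ) : SimpleGraph (Fin m ⊕ Fin n) :=
  (⊤ : SimpleGraph (Fin m)) ⊕g (⊤ : SimpleGraph (Fin n))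

/-- The degree multiset of a finite simple graph. -/
def degreeMultiset {V : Type} [Fintype V] (G : SimpleGraph V) [DecidableRel G.Adj] :
    Multiset ℕ :=
  Finset.univ.val.map fun v => G.degree v

/-- Membership in the class `G_{m,n}`: a graph on `m + n` vertices whose degree multiset
equals that of `K_m ⊔ K_n` and which is not isomorphic to `K_m ⊔ K_n`. -/
def MemGmn (m n : ℕ) {V : Type} [Fintype V] (G : SimpleGraph V) [DecidableRel G.Adj] : Prop :=
  Fintype.card V = m + n ∧
  degreeMultiset G = Multiset.replicate m (m - 1) + Multiset.replicate n (n - 1) ∧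
  IsEmpty (G ≃g cliqueSum m n)

/-! In an `(n-1)`-regular graph on `2n` vertices, call `S` closed if no edge leaves it. A closed
`S` of size `n` makes every vertex of `S` adjacent to all of `S`, and likewise for `Sᶜ`, which
is exactly `K_n ⊔ K_n`. A nonempty closed set contains a vertex and its `n - 1` neighbours,
so when `G ≠ K_n ⊔ K_n` it has more than `n` vertices, and a closed set and its complement
cannot both do so.
In `G - v` a nonempty closed set `T` has at least `n - 1` vertices, and if exactly `n - 1`, then
every vertex of `T` sees all of `T ∪ {v}`, so `T ∪ {v}` is closed of size `n` in `G`; hence both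
sides of a splitting of `G - v` would have at least `n` of its `2n - 1` vertices. -/

open Finset

namespace SimpleGraph

variable {V : Type} {G : SimpleGraph V}

lemma forall_neighborSet_subset_compl [Fintype V] [DecidableEq V] {S : Finset V}
    (hS : ∀ a ∈ S, G.neighborSet a ⊆ S) : ∀ a ∈ Sᶜ, G.neighborSet a ⊆ ↑Sᶜ := by
  intro a ha b hab
  simp only [coe_compl, Set.mem_compl_iff, mem_coe] at ha hab ⊢
  exact fun hb => (mem_compl.1 ha) (hS b hb hab.symm)

lemma exists_neighborSet_subset_of_not_preconnected [Fintype V] [DecidableEq V]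
    (h : ¬ G.Preconnected) :
    ∃ S : Finset V, S.Nonempty ∧ Sᶜ.Nonempty ∧ ∀ a ∈ S, G.neighborSet a ⊆ S := by
  classical
  obtain ⟨u, w, huw⟩ : ∃ u w, ¬ G.Reachable u w := by simpa [Preconnected] using h
  refine ⟨univ.filter (G.Reachable u), ⟨u, by simp⟩, ⟨w, by simpa using huw⟩, ?_⟩
  intro a ha b hab
  simp only [mem_coe, mem_filter, mem_univ, true_and] at ha ⊢
  exact ha.trans (Adj.reachable hab)

section LocallyFinite

variable [G.LocallyFinite] {S : Finset V} {a : V}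

lemma degree_lt_card_of_neighborSet_subset (ha : a ∈ S) (h : G.neighborSet a ⊆ S) :
    G.degree a < S.card := by
  rw [← card_neighborFinset_eq_degree]
  refine card_lt_card ⟨fun x hx => h ((mem_neighborFinset ..).1 hx), fun hS => ?_⟩
  exact G.notMem_neighborFinset_self a (hS ha)

lemma neighborFinset_eq_erase_of_neighborSet_subset [DecidableEq V] (ha : a ∈ S)
    (h : G.neighborSet a ⊆ S) (hcard : G.degree a + 1 = S.card) :
    G.neighborFinset a = S.erase a := by
  refine eq_of_subset_of_card_le (fun x hx => ?_) ?_
  · rw [mem_neighborFinset] at hx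
    exact mem_erase.2 ⟨hx.ne', h hx⟩
  · rw [card_erase_of_mem ha, card_neighborFinset_eq_degree]
    omega

end LocallyFinite

lemma nonempty_iso_cliqueSum_of_adj_iff [Fintype V] [DecidableEq V] (S : Finset V)
    (hadj : ∀ a b, G.Adj a b ↔ a ≠ b ∧ (a ∈ S ↔ b ∈ S)) :
    Nonempty (G ≃g cliqueSum S.card Sᶜ.card) := by
  let e : (⊤ : SimpleGraph {x // x ∈ S}) ⊕g (⊤ : SimpleGraph {x // x ∉ S}) ≃g G :=
    { toEquiv := Equiv.sumCompl _
      map_rel_iff' := by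
        rintro (⟨a, ha⟩ | ⟨a, ha⟩) (⟨b, hb⟩ | ⟨b, hb⟩) <;> simp [hadj, ha, hb] }
  exact ⟨e.symm.trans <| Iso.sumCongr
    (Iso.completeGraph (Fintype.equivFinOfCardEq (by simp)))
    (Iso.completeGraph
      (Fintype.equivFinOfCardEq (by simp [Fintype.card_subtype_compl, card_compl])))⟩

lemma nonempty_iso_cliqueSum_of_neighborSet_subset [Fintype V] [DecidableEq V]
    [DecidableRel G.Adj] (S : Finset V) (hS : ∀ a ∈ S, G.neighborSet a ⊆ S)
    (hdeg : ∀ a ∈ S, G.degree a + 1 = S.card)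
    (hdeg' : ∀ a ∉ S, G.degree a + 1 = Sᶜ.card) :
    Nonempty (G ≃g cliqueSum S.card Sᶜ.card) := by
  refine nonempty_iso_cliqueSum_of_adj_iff S fun a b => ?_
  rw [← mem_neighborFinset]
  by_cases ha : a ∈ S
  · rw [neighborFinset_eq_erase_of_neighborSet_subset ha (hS a ha) (hdeg a ha)]
    simp [ha, ne_comm]
  · have ha' : a ∈ Sᶜ := mem_compl.2 ha
    rw [neighborFinset_eq_erase_of_neighborSet_subset ha' (forall_neighborSet_subset_compl hS a ha')
      (hdeg' a ha)]
    simp [ha, ne_comm]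

lemma neighborSet_subset_insert [DecidableEq V] [G.LocallyFinite] {T : Finset V} {v : V}
    (hv : v ∉ T) (hT : ∀ a ∈ T, G.neighborSet a ⊆ ↑(insert v T))
    (hdeg : ∀ a ∈ insert v T, G.degree a = T.card) :
    ∀ a ∈ insert v T, G.neighborSet a ⊆ ↑(insert v T) := by
  have hnbr : ∀ a ∈ T, G.neighborFinset a = (insert v T).erase a := fun a ha =>
    neighborFinset_eq_erase_of_neighborSet_subset (mem_insert_of_mem ha) (hT a ha)
      (by rw [card_insert_of_notMem hv, hdeg a (mem_insert_of_mem ha)])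
  -- Each `a ∈ T` is adjacent to `v`, and these `#T` edges exhaust the degree of `v`.
  have hv_nbr : G.neighborFinset v = T := by
    refine (eq_of_subset_of_card_le (fun a ha => ?_) ?_).symm
    · have hva : v ∈ G.neighborFinset a := by
        rw [hnbr a ha]
        exact mem_erase.2 ⟨(ne_of_mem_of_not_mem ha hv).symm, mem_insert_self v T⟩
      exact (G.mem_neighborFinset v a).2 ((G.mem_neighborFinset a v).1 hva).symm
    · rw [card_neighborFinset_eq_degree, hdeg v (mem_insert_self v T)]
  intro a ha
  rcases mem_insert.1 ha with rfl | ha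
  · rw [← coe_neighborFinset, hv_nbr]
    exact coe_subset.2 (subset_insert _ _)
  · exact hT a ha

lemma neighborSet_subset_insert_map_of_induce [DecidableEq V] {v : V} {S : Finset ({v}ᶜ : Set V)}
    (hS : ∀ a ∈ S, (G.induce {v}ᶜ).neighborSet a ⊆ S) :
    ∀ a ∈ S.map (Function.Embedding.subtype _),
      G.neighborSet a ⊆ ↑(insert v (S.map (Function.Embedding.subtype _))) := by
  simp only [mem_map, Function.Embedding.coe_subtype]
  rintro _ ⟨a, ha, rfl⟩ b hab
  by_cases hb : b = v
  · simp [hb]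
  · have hbS : (⟨b, hb⟩ : ({v}ᶜ : Set V)) ∈ S := hS a ha hab
    simp only [coe_insert, coe_map, Function.Embedding.coe_subtype, Set.mem_insert_iff,
      Set.mem_image, mem_coe]
    exact Or.inr ⟨_, hbS, rfl⟩

section Regular

variable [Fintype V] [DecidableEq V] [DecidableRel G.Adj] {n : ℕ}

lemma card_ne_of_neighborSet_subset (hcard : Fintype.card V = 2 * n)
    (hdeg : ∀ v, G.degree v = n - 1) (hG : IsEmpty (G ≃g cliqueSum n n)) {S : Finset V}
    (hS : ∀ a ∈ S, G.neighborSet a ⊆ S) : S.card ≠ n := by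
  intro hSn
  have hSc : Sᶜ.card = n := by rw [card_compl, hSn, hcard]; omega
  have hdeg_succ : ∀ a, G.degree a + 1 = n := fun a => by
    have := Fintype.card_pos_iff.2 ⟨a⟩
    rw [hdeg]; omega
  have hiso := nonempty_iso_cliqueSum_of_neighborSet_subset S hS (fun a _ => hSn ▸ hdeg_succ a)
    (fun a _ => hSc ▸ hdeg_succ a)
  rw [hSn, hSc] at hiso
  exact hG.false hiso.some

lemma lt_card_of_neighborSet_subset (hcard : Fintype.card V = 2 * n)
    (hdeg : ∀ v, G.degree v = n - 1) (hG : IsEmpty (G ≃g cliqueSum n n)) {S : Finset V}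
    (hne : S.Nonempty) (hS : ∀ a ∈ S, G.neighborSet a ⊆ S) : n < S.card := by
  obtain ⟨a, ha⟩ := hne
  have hlt := degree_lt_card_of_neighborSet_subset ha (hS a ha)
  have hSn := card_ne_of_neighborSet_subset hcard hdeg hG hS
  rw [hdeg] at hlt
  omega

lemma le_card_of_neighborSet_subset_induce (hcard : Fintype.card V = 2 * n)
    (hdeg : ∀ v, G.degree v = n - 1) (hG : IsEmpty (G ≃g cliqueSum n n)) {v : V}
    {S : Finset ({v}ᶜ : Set V)} (hne : S.Nonempty)
    (hS : ∀ a ∈ S, (G.induce {v}ᶜ).neighborSet a ⊆ S) : n ≤ S.card := by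
  set T := S.map (Function.Embedding.subtype _)
  have hvT : v ∉ T := by simp [T]
  have hT := neighborSet_subset_insert_map_of_induce hS
  have hn : 1 ≤ n := by have := Fintype.card_pos_iff.2 ⟨v⟩; omega
  obtain ⟨a, ha⟩ := hne.map (f := Function.Embedding.subtype _)
  have hlt := degree_lt_card_of_neighborSet_subset (mem_insert_of_mem ha) (hT a ha)
  have hTn : T.card ≠ n - 1 := fun h => card_ne_of_neighborSet_subset hcard hdeg hG
    (neighborSet_subset_insert hvT hT fun a _ => by rw [hdeg, h])
    (by rw [card_insert_of_notMem hvT, h]; omega)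
  have hTS : T.card = S.card := card_map _
  rw [hdeg, card_insert_of_notMem hvT] at hlt
  omega

end Regular

end SimpleGraph

theorem stmt_3 (n : ℕ) {V : Type} [Fintype V] (G : SimpleGraph V) [DecidableRel G.Adj]
    (hcard : Fintype.card V = 2 * n)
    (hdeg : ∀ v : V, G.degree v = n - 1)
    (hnotiso : IsEmpty (G ≃g cliqueSum n n)) :
    G.Connected ∧ 3 ≤ Fintype.card V ∧
      ∀ v : V, (G.induce ({v}ᶜ : Set V)).Connected := by
  classical
  have hn : 2 ≤ n := by
    -- For `n ≤ 1` there are no edges, so any `n` vertices form a closed set.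
    by_contra! hn
    obtain ⟨S, -, hS⟩ := exists_subset_card_eq (s := (univ : Finset V)) (n := n)
      (by rw [card_univ, hcard]; omega)
    refine card_ne_of_neighborSet_subset hcard hdeg hnotiso (S := S) (fun a _ b hab => ?_) hS
    have hpos := card_pos.2 ⟨b, (G.mem_neighborFinset a b).2 hab⟩
    rw [card_neighborFinset_eq_degree, hdeg] at hpos
    omega
  have hconn : G.Connected := by
    refine (connected_iff G).2 ⟨?_, Fintype.card_pos_iff.1 (by omega)⟩
    by_contra h
    obtain ⟨S, hS, hSc, hcl⟩ := exists_neighborSet_subset_of_not_preconnected h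
    have h₁ := lt_card_of_neighborSet_subset hcard hdeg hnotiso hS hcl
    have h₂ := lt_card_of_neighborSet_subset hcard hdeg hnotiso hSc
      (forall_neighborSet_subset_compl hcl)
    have := card_add_card_compl S
    omega
  refine ⟨hconn, by omega, fun v => ?_⟩
  have hcard' : Fintype.card ({v}ᶜ : Set V) = 2 * n - 1 := by
    rw [Fintype.card_compl_set, Set.card_singleton, hcard]
  refine (connected_iff _).2 ⟨?_, Fintype.card_pos_iff.1 (by omega)⟩
  by_contra h
  obtain ⟨S, hS, hSc, hcl⟩ := exists_neighborSet_subset_of_not_preconnected h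
  have h₁ := le_card_of_neighborSet_subset_induce hcard hdeg hnotiso hS hcl
  have h₂ := le_card_of_neighborSet_subset_induce hcard hdeg hnotiso hSc
    (forall_neighborSet_subset_compl hcl)
  have := card_add_card_compl S
  omega
end

section
/- Let m and n be natural numbers with m ≠ n, and let G be a simple graph on m+n vertices having exactly m vertices of degree n and exactly n vertices of degree m, such that G is not isomorphic to the complete bipartite graph K_{m,n}. Then G is 2-connected: G is connected, has at least 3 vertices, and the graph obtained by deleting any single vertex of G is connected. -/
open SimpleGraph

/-!
Every degree is `m` or `n`, and exactly `m` vertices have degree `n`. If `min m n ≤ 1`, the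
vertices of degree `n` are adjacent to all others and the remaining vertices only to them, so
`G ≅ K_{m,n}`. Otherwise every degree is at least `δ = min m n ≥ 2` and at least two vertices
have degree `Δ = max m n`. In `G - v` every neighbour of a vertex lies in its component or is
`v`, so each component has at least `δ` vertices, and the component of a surviving vertex of
degree `Δ` at least `Δ`; two components would need `δ + Δ = |V|` vertices besides `v`.
-/

open Finset

namespace SimpleGraph

section DeleteVertex

variable {V : Type*} [Fintype V] {G : SimpleGraph V}

open Classical in
noncomputable def componentFinset (v : V) (C : (G.induce {v}ᶜ).ConnectedComponent) :
    Finset V :=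
  univ.filter fun w => ∃ h : w ≠ v, (G.induce {v}ᶜ).connectedComponentMk ⟨w, h⟩ = C

theorem mem_componentFinset {v w : V} {C : (G.induce {v}ᶜ).ConnectedComponent} :
    w ∈ componentFinset v C ↔
      ∃ h : w ≠ v, (G.induce {v}ᶜ).connectedComponentMk ⟨w, h⟩ = C := by
  simp [componentFinset]

theorem degree_le_card_componentFinset [DecidableRel G.Adj] {u v : V} (hu : u ≠ v) :
    G.degree u ≤ #(componentFinset v ((G.induce {v}ᶜ).connectedComponentMk ⟨u, hu⟩)) := by
  classical
  set C := (G.induce {v}ᶜ).connectedComponentMk ⟨u, hu⟩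
  have huC : u ∈ componentFinset v C := mem_componentFinset.2 ⟨hu, rfl⟩
  have hN : G.neighborFinset u ⊆ insert v ((componentFinset v C).erase u) := by
    intro w hw
    rw [mem_neighborFinset] at hw
    rcases eq_or_ne w v with rfl | hwv
    · exact mem_insert_self _ _
    · refine mem_insert_of_mem (mem_erase.2 ⟨hw.ne', mem_componentFinset.2 ⟨hwv, ?_⟩⟩)
      exact ConnectedComponent.sound (Adj.reachable (G := G.induce {v}ᶜ) hw.symm)
  calc G.degree u = #(G.neighborFinset u) := (card_neighborFinset_eq_degree G u).symm
    _ ≤ #(insert v ((componentFinset v C).erase u)) := card_le_card hN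
    _ ≤ #((componentFinset v C).erase u) + 1 := card_insert_le _ _
    _ = #(componentFinset v C) := card_erase_add_one huC

theorem card_componentFinset_add_lt {v : V} {C C' : (G.induce {v}ᶜ).ConnectedComponent}
    (hC : C ≠ C') : #(componentFinset v C) + #(componentFinset v C') < Fintype.card V := by
  classical
  have hdisj : Disjoint (componentFinset v C) (componentFinset v C') := by
    refine Finset.disjoint_left.2 fun w hw hw' => hC ?_
    obtain ⟨h, rfl⟩ := mem_componentFinset.1 hw
    obtain ⟨_, rfl⟩ := mem_componentFinset.1 hw'
    rfl
  have hsub : componentFinset v C ∪ componentFinset v C' ⊆ univ.erase v := fun w hw =>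
    mem_erase.2 ⟨by rcases mem_union.1 hw with hw | hw <;> exact (mem_componentFinset.1 hw).1,
      mem_univ w⟩
  have := card_le_card hsub
  rw [card_union_of_disjoint hdisj, card_erase_of_mem (mem_univ v), card_univ] at this
  have : 0 < Fintype.card V := Fintype.card_pos_iff.2 ⟨v⟩
  omega

theorem connected_induce_compl_singleton_of_degree [DecidableRel G.Adj] {δ Δ : ℕ}
    (hδ : ∀ u, δ ≤ G.degree u) {v x : V} (hxv : x ≠ v) (hx : Δ ≤ G.degree x)
    (hcard : Fintype.card V ≤ δ + Δ) :
    (G.induce {v}ᶜ).Connected := by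
  have hcomp : ∀ y : ({v}ᶜ : Set V), (G.induce {v}ᶜ).connectedComponentMk y =
      (G.induce {v}ᶜ).connectedComponentMk ⟨x, hxv⟩ := by
    rintro ⟨y, hyv⟩
    by_contra hne
    have := card_componentFinset_add_lt hne
    have := degree_le_card_componentFinset (G := G) hyv
    have := degree_le_card_componentFinset (G := G) hxv
    have := hδ y
    omega
  have : Nonempty ({v}ᶜ : Set V) := ⟨⟨x, hxv⟩⟩
  exact ⟨fun a b => ConnectedComponent.exact ((hcomp a).trans (hcomp b).symm)⟩

end DeleteVertex

theorem connected_of_connected_induce_compl_singleton {V : Type*} {G : SimpleGraph V} {v w : V}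
    (h : (G.induce {v}ᶜ).Connected) (hvw : G.Adj v w) : G.Connected := by
  have := connected_induce_union h.preconnected (t := {v}) Preconnected.of_subsingleton
    (Set.mem_compl_singleton_iff.2 hvw.ne') rfl hvw.symm
  rw [Set.compl_union_self] at this
  exact (induceUnivIso G).connected_iff.1 this

theorem connected_and_induce_compl_singleton_connected_of_degree {V : Type*} [Fintype V]
    {G : SimpleGraph V} [DecidableRel G.Adj] {δ Δ : ℕ} (hδ : ∀ u, δ ≤ G.degree u)
    (hδ2 : 2 ≤ δ) (S : Finset V) (hS : 1 < #S) (hΔ : ∀ x ∈ S, Δ ≤ G.degree x)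
    (hcard : Fintype.card V ≤ δ + Δ) :
    G.Connected ∧ 3 ≤ Fintype.card V ∧ ∀ v : V, (G.induce {v}ᶜ).Connected := by
  have hdel (v : V) : (G.induce {v}ᶜ).Connected := by
    obtain ⟨x, hxS, hxv⟩ := exists_mem_ne hS v
    exact connected_induce_compl_singleton_of_degree hδ hxv (hΔ x hxS) hcard
  obtain ⟨x, -⟩ := card_pos.1 (zero_lt_one.trans hS)
  obtain ⟨w, hxw⟩ := (G.degree_pos_iff_exists_adj x).1 (by have := hδ x; omega)
  have := G.degree_lt_card_verts x
  have := hδ x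
  exact ⟨connected_of_connected_induce_compl_singleton (hdel x) hxw, by omega, hdel⟩

section CompleteBipartite

variable {V : Type*} {G : SimpleGraph V}

def isoCompleteBipartiteGraphOfAdjIff (p : V → Prop) [DecidablePred p]
    (hadj : ∀ u w, G.Adj u w ↔ (p u ↔ ¬ p w)) :
    G ≃g completeBipartiteGraph {u // p u} {u // ¬ p u} where
  toEquiv := (Equiv.sumCompl p).symm
  map_rel_iff' {u w} := by
    rw [hadj]
    by_cases hu : p u <;> by_cases hw : p w <;>
      simp [Equiv.sumCompl_symm_apply_of_pos, Equiv.sumCompl_symm_apply_of_neg, hu, hw]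

theorem adj_iff_of_card_le_one [Fintype V] [DecidableEq V] [DecidableRel G.Adj] (A : Finset V)
    (hA : #A ≤ 1) (hin : ∀ a ∈ A, G.degree a = Fintype.card V - #A)
    (hout : ∀ u ∉ A, G.degree u = #A) (u w : V) : G.Adj u w ↔ (u ∈ A ↔ w ∉ A) := by
  have huniv (a : V) (ha : a ∈ A) : G.IsUniversal a := by
    rw [← degree_eq_card_sub_one, hin a ha, le_antisymm hA (card_pos.2 ⟨a, ha⟩)]
  by_cases hu : u ∈ A
  · by_cases hw : w ∈ A
    · simp [card_le_one.1 hA u hu w hw, hw]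
    · simp only [hu, hw, not_false_eq_true, iff_true]
      exact huniv u hu (ne_of_mem_of_not_mem hu hw)
  · have hN : G.neighborFinset u = A := by
      refine (eq_of_subset_of_card_le (fun a ha => ?_) ?_).symm
      · exact (G.mem_neighborFinset u a).2 (huniv a ha (ne_of_mem_of_not_mem ha hu)).symm
      · rw [card_neighborFinset_eq_degree, hout u hu]
    rw [← mem_neighborFinset, hN]
    tauto

theorem nonempty_iso_completeBipartiteGraph_of_degree [Fintype V] [DecidableRel G.Adj]
    {m n : ℕ} (hmn : m ≤ 1 ∨ n ≤ 1) (A : Finset V) (hA : #A = m)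
    (hcard : Fintype.card V = m + n)
    (hin : ∀ a ∈ A, G.degree a = n) (hout : ∀ u ∉ A, G.degree u = m) :
    Nonempty (G ≃g completeBipartiteGraph (Fin m) (Fin n)) := by
  classical
  have hAc : #Aᶜ = n := by rw [card_compl, hA, hcard]; omega
  have hadj : ∀ u w, G.Adj u w ↔ (u ∈ A ↔ w ∉ A) := by
    rcases hmn with hm | hn
    · exact adj_iff_of_card_le_one A (by omega) (fun a ha => by rw [hin a ha]; omega)
        (fun u hu => by rw [hout u hu]; omega)
    · intro u w
      rw [adj_iff_of_card_le_one Aᶜ (by omega)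
        (fun a ha => by rw [hout a (mem_compl.1 ha)]; omega)
        (fun u hu => by rw [hin u (by simpa using hu)]; omega)]
      simp only [mem_compl]
      tauto
  exact ⟨(isoCompleteBipartiteGraphOfAdjIff (· ∈ A) hadj).trans <|
    completeBipartiteGraphCongr (Fintype.equivFinOfCardEq (by simp [hA]))
      (Fintype.equivFinOfCardEq (by simp [Fintype.card_subtype_compl, hA, hcard]))⟩

end CompleteBipartite

end SimpleGraph

theorem degree_mem_degreeMultiset {V : Type} [Fintype V] (G : SimpleGraph V) [DecidableRel G.Adj]
    (v : V) : G.degree v ∈ degreeMultiset G :=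
  Multiset.mem_map_of_mem _ (mem_univ v)

theorem count_degreeMultiset {V : Type} [Fintype V] (G : SimpleGraph V) [DecidableRel G.Adj]
    (k : ℕ) : (degreeMultiset G).count k = #(univ.filter fun v => G.degree v = k) := by
  rw [degreeMultiset, Multiset.count_map, card, filter_val]
  exact congrArg _ (Multiset.filter_congr fun _ _ => eq_comm)

theorem stmt_5 (m n : ℕ) (hmn : m ≠ n) {V : Type} [Fintype V] (G : SimpleGraph V)
    [DecidableRel G.Adj]
    (hcard : Fintype.card V = m + n)
    (hdeg : degreeMultiset G = Multiset.replicate m n + Multiset.replicate n m)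
    (hnotiso : IsEmpty (G ≃g completeBipartiteGraph (Fin m) (Fin n))) :
    G.Connected ∧ 3 ≤ Fintype.card V ∧
      ∀ v : V, (G.induce ({v}ᶜ : Set V)).Connected := by
  classical
  set A := univ.filter fun v => G.degree v = n
  have hA : #A = m := by
    rw [← count_degreeMultiset, hdeg]
    simp [Multiset.count_replicate, hmn]
  have hin : ∀ a ∈ A, G.degree a = n := fun a ha => (mem_filter.1 ha).2
  have hout : ∀ u ∉ A, G.degree u = m := fun u hu => by
    have := degree_mem_degreeMultiset G u
    simp only [hdeg, Multiset.mem_add, Multiset.mem_replicate] at this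
    simp only [A, mem_filter, mem_univ, true_and] at hu
    omega
  have hbig : 2 ≤ m ∧ 2 ≤ n := by
    by_contra hsmall
    exact hnotiso.elim
      (nonempty_iso_completeBipartiteGraph_of_degree (by omega) A hA hcard hin hout).some
  have hmin (u : V) : min m n ≤ G.degree u := by
    by_cases hu : u ∈ A
    · rw [hin u hu]; omega
    · rw [hout u hu]; omega
  rcases hmn.lt_or_gt with hlt | hgt
  · exact connected_and_induce_compl_singleton_connected_of_degree hmin (by omega) A (by omega)
      (fun x hx => (hin x hx).ge) (by omega)
  · exact connected_and_induce_compl_singleton_connected_of_degree hmin (by omega) Aᶜ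
      (by rw [card_compl, hA, hcard]; omega) (fun x hx => (hout x (mem_compl.1 hx)).ge) (by omega)
end

section
/- Let m and n be natural numbers with m ≤ n and let G be a simple graph in the class G_{m,n} that is bipartite with bipartition (V_1, V_2) where |V_1| ≤ |V_2|. Then one of the following holds: (1) |V_1| = |V_2|, n = m+2, and both m and n are even; (2) |V_1| = m, |V_2| = n, and n = m+1; (3) |V_1| = |V_2| and m = n. -/
open SimpleGraph

/-- `G` is bipartite with bipartition `(V₁, V₂)`: the two parts are nonempty, disjoint,
independent sets covering all vertices. -/
def IsBipartition {V : Type} (G : SimpleGraph V) (V₁ V₂ : Set V) : Prop :=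
  V₁.Nonempty ∧ V₂.Nonempty ∧ Disjoint V₁ V₂ ∧ V₁ ∪ V₂ = Set.univ ∧
  (∀ u ∈ V₁, ∀ v ∈ V₁, ¬ G.Adj u v) ∧ (∀ u ∈ V₂, ∀ v ∈ V₂, ¬ G.Adj u v)

theorem stmt_8 (m n : ℕ) (hmn : m ≤ n) {V : Type} [Fintype V] (G : SimpleGraph V)
    [DecidableRel G.Adj] (hG : MemGmn m n G)
    (V₁ V₂ : Set V) (hbip : IsBipartition G V₁ V₂) (hle : V₁.ncard ≤ V₂.ncard) :
    (V₁.ncard = V₂.ncard ∧ n = m + 2 ∧ Even m ∧ Even n) ∨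
    (V₁.ncard = m ∧ V₂.ncard = n ∧ n = m + 1) ∨
    (V₁.ncard = V₂.ncard ∧ m = n) := by
  classical
  obtain ⟨hcard, hdeg, -⟩ := hG
  obtain ⟨⟨w₁, hw₁⟩, ⟨w₂, hw₂⟩, hdisj, hunion, hind₁, hind₂⟩ := hbip
  set A := V₁.toFinset with hAdef
  set B := V₂.toFinset with hBdef
  have hnc1 : V₁.ncard = A.card := Set.ncard_eq_toFinset_card' _
  have hnc2 : V₂.ncard = B.card := Set.ncard_eq_toFinset_card' _
  rw [hnc1, hnc2] at hle ⊢
  have hAB : A ∪ B = Finset.univ := by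
    ext v
    simp only [Finset.mem_union, hAdef, hBdef, Set.mem_toFinset, Finset.mem_univ, iff_true]
    have : v ∈ V₁ ∪ V₂ := hunion ▸ Set.mem_univ v
    exact this
  have hABdisj : Disjoint A B := Set.disjoint_toFinset.2 hdisj
  have hab : A.card + B.card = m + n := by
    rw [← Finset.card_union_of_disjoint hABdisj, hAB, ← hcard, Finset.card_univ]
  have ha1 : 1 ≤ A.card := Finset.card_pos.2 ⟨w₁, Set.mem_toFinset.2 hw₁⟩
  have hb1 : 1 ≤ B.card := Finset.card_pos.2 ⟨w₂, Set.mem_toFinset.2 hw₂⟩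
  -- every degree is m-1 or n-1
  have hdg : ∀ v : V, G.degree v = m - 1 ∨ G.degree v = n - 1 := by
    intro v
    have hv : G.degree v ∈ degreeMultiset G := Multiset.mem_map_of_mem _ (Finset.mem_univ_val v)
    rw [hdeg] at hv
    rcases Multiset.mem_add.1 hv with h | h
    · exact Or.inl (Multiset.eq_of_mem_replicate h)
    · exact Or.inr (Multiset.eq_of_mem_replicate h)
  -- neighbors cross the partition
  have hnbrA : ∀ v ∈ A, G.neighborFinset v ⊆ B := by
    intro v hv u hu
    rw [SimpleGraph.mem_neighborFinset] at hu
    have hu2 : u ∈ V₁ ∪ V₂ := hunion ▸ Set.mem_univ u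
    rcases hu2 with h | h
    · exact absurd hu (hind₁ v (Set.mem_toFinset.1 hv) u h)
    · exact Set.mem_toFinset.2 h
  have hnbrB : ∀ v ∈ B, G.neighborFinset v ⊆ A := by
    intro v hv u hu
    rw [SimpleGraph.mem_neighborFinset] at hu
    have hu2 : u ∈ V₁ ∪ V₂ := hunion ▸ Set.mem_univ u
    rcases hu2 with h | h
    · exact Set.mem_toFinset.2 h
    · exact absurd hu (hind₂ v (Set.mem_toFinset.1 hv) u h)
  have hdegB : ∀ v ∈ B, G.degree v ≤ A.card := fun v hv =>
    Finset.card_le_card (hnbrB v hv)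
  -- sum of degrees over A equals sum over B
  have hsumAB : ∑ v ∈ A, G.degree v = ∑ v ∈ B, G.degree v := by
    have key : ∀ (C D : Finset V), (∀ v ∈ C, G.neighborFinset v ⊆ D) →
        ∀ v ∈ C, G.degree v = ∑ u ∈ D, if G.Adj v u then 1 else 0 := by
      intro C D hCD v hv
      rw [Finset.sum_boole]
      have : G.neighborFinset v = D.filter (fun u => G.Adj v u) := by
        ext u
        simp only [SimpleGraph.mem_neighborFinset, Finset.mem_filter]
        exact ⟨fun h => ⟨hCD v hv ((G.mem_neighborFinset v u).2 h), h⟩, fun h => h.2⟩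
      rw [SimpleGraph.degree, this]
      simp
    rw [Finset.sum_congr rfl (key A B hnbrA), Finset.sum_congr rfl (key B A hnbrB),
      Finset.sum_comm]
    apply Finset.sum_congr rfl
    intro u _
    apply Finset.sum_congr rfl
    intro v _
    simp only [SimpleGraph.adj_comm]
  rcases eq_or_lt_of_le hmn with heq | hlt
  · -- case m = n
    subst heq
    right; right
    refine ⟨?_, rfl⟩
    rcases Nat.lt_or_ge m 2 with hm | hm
    · omega
    · have hall : ∀ v : V, G.degree v = m - 1 := by
        intro v; rcases hdg v with h | h <;> exact h
      have h1 : ∑ v ∈ A, G.degree v = A.card * (m - 1) := by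
        rw [Finset.sum_congr rfl (fun v _ => hall v), Finset.sum_const, smul_eq_mul]
      have h2 : ∑ v ∈ B, G.degree v = B.card * (m - 1) := by
        rw [Finset.sum_congr rfl (fun v _ => hall v), Finset.sum_const, smul_eq_mul]
      have h3 : A.card * (m - 1) = B.card * (m - 1) := by rw [← h1, ← h2, hsumAB]
      exact Nat.eq_of_mul_eq_mul_right (by omega) h3
  · -- case m < n
    set p : V → Prop := fun v => G.degree v = n - 1 with hp
    have hne : ¬ ((m : ℕ) - 1 = n - 1) := by omega
    have hScard : (Finset.univ.filter p).card = n := by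
      have h1 : Multiset.count (n - 1) (degreeMultiset G) = n := by
        rw [hdeg, Multiset.count_add, Multiset.count_replicate, Multiset.count_replicate]
        simp [hne]
      have h2 : (Finset.univ.filter p).card =
          Multiset.card (Multiset.filter (fun a => n - 1 = G.degree a) Finset.univ.val) := by
        rw [Finset.card, Finset.filter_val]
        congr 1
        apply Multiset.filter_congr
        intro v _
        exact ⟨fun h => h.symm, fun h => h.symm⟩
      rw [h2]
      rw [degreeMultiset, Multiset.count_map] at h1
      exact h1
    set x := (A.filter p).card with hx
    set y := (B.filter p).card with hy
    have hxy : x + y = n := by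
      have hU : Finset.univ.filter p = A.filter p ∪ B.filter p := by
        rw [← hAB, Finset.filter_union]
      rw [← hScard, hU,
        Finset.card_union_of_disjoint (Finset.disjoint_filter_filter hABdisj)]
    have hxA : x ≤ A.card := Finset.card_filter_le _ _
    have hyB : y ≤ B.card := Finset.card_filter_le _ _
    have hy1 : 1 ≤ y := by
      by_contra h
      omega
    obtain ⟨v, hv⟩ := Finset.card_pos.1 (by omega : 0 < (B.filter p).card)
    have hvB := Finset.mem_filter.1 hv
    have hna : n - 1 ≤ A.card := hvB.2 ▸ hdegB v hvB.1
    have hcases : n = m + 1 ∨ n = m + 2 := by omega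
    rcases hcases with hnm | hnm
    · right; left
      exact ⟨by omega, by omega, hnm⟩
    · -- n = m + 2, A.card = B.card = m + 1
      have hAcard : A.card = m + 1 := by omega
      have hBcard : B.card = m + 1 := by omega
      rcases Nat.eq_zero_or_pos m with hm0 | hm1
      · subst hm0
        exact Or.inl ⟨by omega, by omega, ⟨0, rfl⟩, by rw [hnm]; exact ⟨1, rfl⟩⟩
      · have hsplit : ∀ C : Finset V, (∑ v ∈ C, G.degree v) =
            (C.filter p).card * (n - 1) + (C.filter (fun v => ¬ p v)).card * (m - 1) := by
          intro C
          rw [← Finset.sum_filter_add_sum_filter_not C p]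
          congr 1
          · rw [Finset.sum_congr rfl (fun v hv => (Finset.mem_filter.1 hv).2),
              Finset.sum_const, smul_eq_mul]
          · rw [Finset.sum_congr rfl
              (fun v hv => ((hdg v).resolve_right (Finset.mem_filter.1 hv).2)),
              Finset.sum_const, smul_eq_mul]
        set x' := (A.filter (fun v => ¬ p v)).card with hx'
        set y' := (B.filter (fun v => ¬ p v)).card with hy'
        have hxx' : x + x' = A.card := Finset.card_filter_add_card_filter_not p
        have hyy' : y + y' = B.card := Finset.card_filter_add_card_filter_not p
        have heq2 : x * (n - 1) + x' * (m - 1) = y * (n - 1) + y' * (m - 1) := by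
          rw [← hsplit A, ← hsplit B, hsumAB]
        have hn1 : n - 1 = (m - 1) + 2 := by omega
        have eA : x * (n - 1) + x' * (m - 1) = 2 * x + (x + x') * (m - 1) := by
          rw [hn1]; ring
        have eB : y * (n - 1) + y' * (m - 1) = 2 * y + (y + y') * (m - 1) := by
          rw [hn1]; ring
        rw [eA, eB, hxx', hyy', hAcard, hBcard] at heq2
        have hxyeq : 2 * x = 2 * y := Nat.add_right_cancel heq2
        refine Or.inl ⟨by omega, hnm, ?_, ?_⟩
        · rw [Nat.even_iff]; omega
        · rw [Nat.even_iff]; omega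
end

section
/- Let G be a simple graph in the class G_{m,n}. Then for every pair of vertices u and v of G, the shortest-path distance between u and v in G is at most 4; in particular, the diameter of G is at most 4. -/
open SimpleGraph

section Aux
set_option linter.unusedSectionVars false
variable {V : Type} [Fintype V] [DecidableEq V] (G : SimpleGraph V) [DecidableRel G.Adj]

lemma my_dist_triangle {u v w : V} (h1 : G.Reachable u v) (h2 : G.Reachable v w) :
    G.dist u w ≤ G.dist u v + G.dist v w := by
  obtain ⟨p, hp⟩ := h1.exists_walk_length_eq_dist
  obtain ⟨q, hq⟩ := h2.exists_walk_length_eq_dist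
  rw [← hp, ← hq, ← Walk.length_append]
  apply dist_le

/-- closed neighborhood -/
def cnbhd (v : V) : Finset V := insert v (G.neighborFinset v)

lemma mem_cnbhd_self (v : V) : v ∈ cnbhd G v := Finset.mem_insert_self _ _

lemma card_cnbhd (v : V) : (cnbhd G v).card = G.degree v + 1 := by
  rw [cnbhd, Finset.card_insert_of_notMem (G.notMem_neighborFinset_self v),
    G.card_neighborFinset_eq_degree, Nat.add_comm]

lemma of_mem_cnbhd {x v : V} (h : x ∈ cnbhd G v) : G.Reachable v x ∧ G.dist v x ≤ 1 := by
  rcases Finset.mem_insert.mp h with h | h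
  · subst h; exact ⟨Reachable.refl _, by rw [SimpleGraph.dist_self]; omega⟩
  · rw [mem_neighborFinset] at h
    exact ⟨h.reachable, le_of_eq (dist_eq_one_iff_adj.mpr h)⟩

lemma of_mem_both {a b x : V} (ha : x ∈ cnbhd G a) (hb : x ∈ cnbhd G b) :
    G.Reachable a b ∧ G.dist a b ≤ 2 := by
  obtain ⟨hra, hda⟩ := of_mem_cnbhd G ha
  obtain ⟨hrb, hdb⟩ := of_mem_cnbhd G hb
  refine ⟨hra.trans hrb.symm, ?_⟩
  calc G.dist a b ≤ G.dist a x + G.dist x b := my_dist_triangle G hra hrb.symm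
    _ ≤ 1 + 1 := by rw [SimpleGraph.dist_comm (u := x) (v := b)]; omega
    _ = 2 := rfl

lemma two_mem {w a b : V} (ha : a ∈ cnbhd G w) (hb : b ∈ cnbhd G w) : G.dist a b ≤ 2 := by
  obtain ⟨hra, hda⟩ := of_mem_cnbhd G ha
  obtain ⟨hrb, hdb⟩ := of_mem_cnbhd G hb
  have htri := my_dist_triangle G hra.symm hrb
  rw [SimpleGraph.dist_comm (u := a) (v := w)] at htri
  omega

lemma final (x0 x2 x3 x5 w : V)
    (h05 : G.dist x0 x5 = 5) (h02 : G.dist x0 x2 = 2) (h25 : G.dist x2 x5 = 3)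
    (h35 : G.dist x3 x5 = 2) (h03 : G.dist x0 x3 = 3)
    (hsum0 : (cnbhd G x0).card + (cnbhd G w).card = Fintype.card V)
    (hsum5 : 3 ≤ G.dist w x5 → (cnbhd G x5).card + (cnbhd G w).card = Fintype.card V) :
    False := by
  have hr05 : G.Reachable x0 x5 := Reachable.of_dist_ne_zero (by omega)
  by_cases hrw : G.Reachable x0 w
  · -- reachable case
    have htri : (5 : ℕ) ≤ G.dist x0 w + G.dist w x5 := by
      have := my_dist_triangle G hrw (hrw.symm.trans hr05)
      omega
    by_cases hA : 3 ≤ G.dist x0 w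
    · -- N[x0] and N[w] are disjoint and partition V
      have hdisj : Disjoint (cnbhd G x0) (cnbhd G w) := by
        rw [Finset.disjoint_left]
        intro x hx hx'
        have := (of_mem_both G hx hx').2
        omega
      have huniv : cnbhd G x0 ∪ cnbhd G w = Finset.univ := by
        apply Finset.eq_univ_of_card
        rw [Finset.card_union_of_disjoint hdisj, hsum0]
      have hx2 : x2 ∈ cnbhd G w := by
        rcases Finset.mem_union.mp (huniv ▸ Finset.mem_univ x2) with h | h
        · have := (of_mem_cnbhd G h).2; omega
        · exact h
      have hx5 : x5 ∈ cnbhd G w := by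
        rcases Finset.mem_union.mp (huniv ▸ Finset.mem_univ x5) with h | h
        · have := (of_mem_cnbhd G h).2; omega
        · exact h
      have := two_mem G hx2 hx5
      omega
    · -- then dist w x5 ≥ 3; N[x5] and N[w] partition V
      have hB : 3 ≤ G.dist w x5 := by omega
      have hdisj : Disjoint (cnbhd G x5) (cnbhd G w) := by
        rw [Finset.disjoint_left]
        intro x hx hx'
        have := (of_mem_both G hx hx').2
        rw [SimpleGraph.dist_comm (u := x5) (v := w)] at this
        omega
      have huniv : cnbhd G x5 ∪ cnbhd G w = Finset.univ := by
        apply Finset.eq_univ_of_card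
        rw [Finset.card_union_of_disjoint hdisj, hsum5 hB]
      have hx3 : x3 ∈ cnbhd G w := by
        rcases Finset.mem_union.mp (huniv ▸ Finset.mem_univ x3) with h | h
        · have := (of_mem_cnbhd G h).2
          rw [SimpleGraph.dist_comm (u := x3) (v := x5)] at h35; omega
        · exact h
      have hx0 : x0 ∈ cnbhd G w := by
        rcases Finset.mem_union.mp (huniv ▸ Finset.mem_univ x0) with h | h
        · have := (of_mem_cnbhd G h).2
          rw [SimpleGraph.dist_comm (u := x0) (v := x5)] at h05; omega
        · exact h
      have := two_mem G hx0 hx3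
      omega
  · -- w not reachable from x0 (or x5): three pairwise disjoint closed nbhds
    have hrw5 : ¬ G.Reachable x5 w := fun h => hrw (hr05.trans h)
    have hd1 : Disjoint (cnbhd G x0) (cnbhd G w) := by
      rw [Finset.disjoint_left]
      intro x hx hx'
      exact hrw (of_mem_both G hx hx').1
    have hd2 : Disjoint (cnbhd G x5) (cnbhd G w) := by
      rw [Finset.disjoint_left]
      intro x hx hx'
      exact hrw5 (of_mem_both G hx hx').1
    have hd3 : Disjoint (cnbhd G x0) (cnbhd G x5) := by
      rw [Finset.disjoint_left]
      intro x hx hx'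
      have := (of_mem_both G hx hx').2
      omega
    have hcard : ((cnbhd G x0 ∪ cnbhd G w) ∪ cnbhd G x5).card ≤ Fintype.card V :=
      Finset.card_le_univ _
    rw [Finset.card_union_of_disjoint (by
        rw [Finset.disjoint_union_left]; exact ⟨hd3, hd2.symm⟩),
      Finset.card_union_of_disjoint hd1, hsum0] at hcard
    have : 0 < (cnbhd G x5).card := Finset.card_pos.mpr ⟨x5, mem_cnbhd_self G x5⟩
    omega

lemma reach_getVert {u v : V} (p : G.Walk u v) : ∀ i, G.Reachable u (p.getVert i) := by
  intro i
  induction i with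
  | zero => rw [p.getVert_zero]
  | succ i ih =>
    by_cases h : i < p.length
    · exact ih.trans (p.adj_getVert_succ h).reachable
    · rw [p.getVert_of_length_le (by omega)]
      rw [p.getVert_of_length_le (by omega)] at ih
      exact ih

lemma step_le {u v : V} (p : G.Walk u v) (i : ℕ) :
    G.dist (p.getVert i) (p.getVert (i + 1)) ≤ 1 := by
  by_cases h : i < p.length
  · exact le_of_eq (dist_eq_one_iff_adj.mpr (p.adj_getVert_succ h))
  · rw [p.getVert_of_length_le (by omega : p.length ≤ i),
      p.getVert_of_length_le (by omega : p.length ≤ i + 1), SimpleGraph.dist_self]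
    omega

lemma ub_getVert {u v : V} (p : G.Walk u v) (i : ℕ) :
    ∀ k, G.dist (p.getVert i) (p.getVert (i + k)) ≤ k := by
  intro k
  induction k with
  | zero => simp [SimpleGraph.dist_self]
  | succ k ih =>
    have hr1 : G.Reachable (p.getVert i) (p.getVert (i + k)) :=
      (reach_getVert G p i).symm.trans (reach_getVert G p (i + k))
    have hr2 : G.Reachable (p.getVert (i + k)) (p.getVert (i + k + 1)) :=
      (reach_getVert G p (i + k)).symm.trans (reach_getVert G p (i + k + 1))
    have htri := my_dist_triangle G hr1 hr2
    have hstep := step_le G p (i + k)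
    calc G.dist (p.getVert i) (p.getVert (i + (k + 1)))
        = G.dist (p.getVert i) (p.getVert (i + k + 1)) := by ring_nf
      _ ≤ k + 1 := by omega

lemma semi (a b : ℕ) (hcardV : Fintype.card V = a + b)
    (x0 x2 x3 x5 : V)
    (h05 : G.dist x0 x5 = 5) (h02 : G.dist x0 x2 = 2) (h25 : G.dist x2 x5 = 3)
    (h35 : G.dist x3 x5 = 2) (h03 : G.dist x0 x3 = 3)
    (hc0 : (cnbhd G x0).card = a)
    (hc5 : (cnbhd G x5).card = a ∨ (cnbhd G x5).card = b)
    (hex : 1 ≤ b → ∃ w : V, (cnbhd G w).card = b) : False := by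
  rcases hc5 with hc5 | hc5
  · by_cases hb : 1 ≤ b
    · obtain ⟨w, hw⟩ := hex hb
      exact final G x0 x2 x3 x5 w h05 h02 h25 h35 h03 (by omega) (fun _ => by omega)
    · have huniv : cnbhd G x0 = Finset.univ := Finset.eq_univ_of_card _ (by omega)
      have hx5 : x5 ∈ cnbhd G x0 := huniv ▸ Finset.mem_univ x5
      have := (of_mem_cnbhd G hx5).2
      omega
  · exact final G x0 x2 x3 x5 x5 h05 h02 h25 h35 h03 (by omega)
      (fun h => by rw [SimpleGraph.dist_self] at h; omega)

end Aux

theorem stmt_12 (m n : ℕ) {V : Type} [Fintype V] (G : SimpleGraph V) [DecidableRel G.Adj]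
    (hG : MemGmn m n G) :
    ∀ u v : V, G.dist u v ≤ 4 := by
  classical
  obtain ⟨hcard, hdegms, -⟩ := hG
  intro u v
  by_contra hlt
  push_neg at hlt
  have hd5 : 5 ≤ G.dist u v := hlt
  obtain ⟨p, hp⟩ := exists_walk_of_dist_ne_zero (G := G) (u := u) (v := v) (by omega)
  set x : ℕ → V := p.getVert with hx
  have h5len : 5 ≤ p.length := by omega
  have hub : ∀ i j : ℕ, i ≤ j → G.dist (x i) (x j) ≤ j - i := by
    intro i j hij
    have := ub_getVert G p i (j - i)
    rwa [Nat.add_sub_cancel' hij] at this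
  have hreach : ∀ i, G.Reachable u (x i) := reach_getVert G p
  have hx0 : x 0 = u := p.getVert_zero
  have hxd : x p.length = v := p.getVert_length
  have hexact0 : ∀ j, j ≤ p.length → G.dist u (x j) = j := by
    intro j hj
    have h1 : G.dist u (x j) ≤ j := by
      have := hub 0 j (by omega); rwa [hx0] at this
    have h2 : G.dist (x j) v ≤ p.length - j := by
      have := hub j p.length hj; rwa [hxd] at this
    have h3 : G.dist u v ≤ G.dist u (x j) + G.dist (x j) v :=
      my_dist_triangle G (hreach j)
        ((hreach j).symm.trans (Reachable.of_dist_ne_zero (by omega)))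
    omega
  have hdij : ∀ i j : ℕ, i ≤ j → j ≤ p.length → G.dist (x i) (x j) = j - i := by
    intro i j hij hj
    have h1 := hub i j hij
    have h2 := hexact0 i (le_trans hij hj)
    have h3 := hexact0 j hj
    have h4 : G.dist u (x j) ≤ G.dist u (x i) + G.dist (x i) (x j) :=
      my_dist_triangle G (hreach i) ((hreach i).symm.trans (hreach j))
    omega
  have d05 : G.dist (x 0) (x 5) = 5 := hdij 0 5 (by omega) (by omega)
  have d02 : G.dist (x 0) (x 2) = 2 := hdij 0 2 (by omega) (by omega)
  have d25 : G.dist (x 2) (x 5) = 3 := hdij 2 5 (by omega) (by omega)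
  have d35 : G.dist (x 3) (x 5) = 2 := hdij 3 5 (by omega) (by omega)
  have d03 : G.dist (x 0) (x 3) = 3 := hdij 0 3 (by omega) (by omega)
  -- degree facts from the multiset hypothesis
  have hdeg : ∀ w : V, ((cnbhd G w).card = m ∧ 1 ≤ m) ∨ ((cnbhd G w).card = n ∧ 1 ≤ n) := by
    intro w
    have hm : G.degree w ∈ degreeMultiset G := by
      simp only [degreeMultiset, Multiset.mem_map]
      exact ⟨w, Finset.mem_univ_val w, rfl⟩
    rw [hdegms] at hm
    rcases Multiset.mem_add.mp hm with h | h
    · obtain ⟨h1, h2⟩ := Multiset.mem_replicate.mp h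
      left
      constructor
      · rw [card_cnbhd, h2]
        omega
      · omega
    · obtain ⟨h1, h2⟩ := Multiset.mem_replicate.mp h
      right
      constructor
      · rw [card_cnbhd, h2]
        omega
      · omega
  have hexm : 1 ≤ m → ∃ w : V, (cnbhd G w).card = m := by
    intro hm1
    have hmem : (m - 1 : ℕ) ∈ degreeMultiset G := by
      rw [hdegms]
      exact Multiset.mem_add.mpr (Or.inl (Multiset.mem_replicate.mpr ⟨by omega, rfl⟩))
    obtain ⟨w, -, hw⟩ := Multiset.mem_map.mp hmem
    exact ⟨w, by rw [card_cnbhd, hw]; omega⟩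
  have hexn : 1 ≤ n → ∃ w : V, (cnbhd G w).card = n := by
    intro hn1
    have hmem : (n - 1 : ℕ) ∈ degreeMultiset G := by
      rw [hdegms]
      exact Multiset.mem_add.mpr (Or.inr (Multiset.mem_replicate.mpr ⟨by omega, rfl⟩))
    obtain ⟨w, -, hw⟩ := Multiset.mem_map.mp hmem
    exact ⟨w, by rw [card_cnbhd, hw]; omega⟩
  rcases hdeg (x 0) with ⟨hc0, -⟩ | ⟨hc0, -⟩
  · exact semi G m n hcard (x 0) (x 2) (x 3) (x 5) d05 d02 d25 d35 d03 hc0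
      ((hdeg (x 5)).elim (fun h => Or.inl h.1) (fun h => Or.inr h.1)) hexn
  · exact semi G n m (by omega) (x 0) (x 2) (x 3) (x 5) d05 d02 d25 d35 d03 hc0
      ((hdeg (x 5)).elim (fun h => Or.inr h.1) (fun h => Or.inl h.1)) hexm
end

section
/- Let G be a simple graph in the class \overline{G}_{m,n}. Then for every pair of vertices u and v of G, the shortest-path distance between u and v in G is at most 4; in particular, the diameter of G is at most 4. -/
open SimpleGraph

lemma walk_split {V : Type} {G : SimpleGraph V} {a b : V} (p : G.Walk a b) (k : ℕ) :
    ∃ (q : G.Walk a (p.getVert k)) (r : G.Walk (p.getVert k) b),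
      q.length = min k p.length ∧ q.length + r.length = p.length := by
  induction p generalizing k with
  | nil =>
    exact ⟨Walk.nil.copy rfl (Walk.getVert_of_length_le _ (by simp)).symm,
      Walk.nil.copy (Walk.getVert_of_length_le _ (by simp)).symm rfl, by simp⟩
  | cons h p' ih =>
    cases k with
    | zero =>
      exact ⟨Walk.nil.copy rfl (Walk.getVert_zero _).symm,
        (Walk.cons h p').copy (Walk.getVert_zero _).symm rfl, by simp⟩
    | succ k =>
      obtain ⟨q, r, hq, hqr⟩ := ih k
      have he : (Walk.cons h p').getVert (k+1) = p'.getVert k := Walk.getVert_cons_succ _ _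
      refine ⟨(Walk.cons h q).copy rfl he.symm, r.copy he.symm rfl, ?_⟩
      simp only [Walk.length_copy, Walk.length_cons]
      omega

lemma helper (m n : ℕ) {V : Type} [Fintype V] (G : SimpleGraph V) [DecidableRel G.Adj]
    (hmn : m ≤ n) (hcard : Fintype.card V = m + n)
    (hdeg : degreeMultiset G = Multiset.replicate m n + Multiset.replicate n m) :
    ∀ u v : V, G.dist u v ≤ 4 := by
  classical
  have hdegmem : ∀ w : V, G.degree w = n ∨ G.degree w = m := by
    intro w
    have hw : G.degree w ∈ degreeMultiset G :=
      Multiset.mem_map_of_mem _ (Finset.mem_val.mpr (Finset.mem_univ w))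
    rw [hdeg, Multiset.mem_add] at hw
    rcases hw with hw | hw
    · exact Or.inl (Multiset.eq_of_mem_replicate hw)
    · exact Or.inr (Multiset.eq_of_mem_replicate hw)
  have hshort : ∀ a b z : V, (z = a ∨ G.Adj a z) → (z = b ∨ G.Adj b z) →
      ∃ q : G.Walk a b, q.length ≤ 2 := by
    intro a b z h1 h2
    have w1 : ∃ q : G.Walk a z, q.length ≤ 1 := by
      rcases h1 with rfl | h
      · exact ⟨Walk.nil, by simp⟩
      · exact ⟨h.toWalk, by simp⟩
    have w2 : ∃ q : G.Walk z b, q.length ≤ 1 := by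
      rcases h2 with rfl | h
      · exact ⟨Walk.nil, by simp⟩
      · exact ⟨h.symm.toWalk, by simp⟩
    obtain ⟨q1, hq1⟩ := w1
    obtain ⟨q2, hq2⟩ := w2
    exact ⟨q1.append q2, by rw [Walk.length_append]; omega⟩
  have hfar : ∀ a b : V, (∀ z : V, ¬((z = a ∨ G.Adj a z) ∧ (z = b ∨ G.Adj b z))) →
      G.degree a + G.degree b + 2 ≤ m + n := by
    intro a b hno
    have hdisj : Disjoint (insert a (G.neighborFinset a)) (insert b (G.neighborFinset b)) := by
      rw [Finset.disjoint_left]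
      intro z hz hz'
      simp only [Finset.mem_insert, SimpleGraph.mem_neighborFinset] at hz hz'
      exact hno z ⟨hz, hz'⟩
    have hA : (insert a (G.neighborFinset a)).card = G.degree a + 1 := by
      rw [Finset.card_insert_of_notMem (by simp), SimpleGraph.card_neighborFinset_eq_degree]
    have hB : (insert b (G.neighborFinset b)).card = G.degree b + 1 := by
      rw [Finset.card_insert_of_notMem (by simp), SimpleGraph.card_neighborFinset_eq_degree]
    have hcup := Finset.card_union_of_disjoint hdisj
    have hle := Finset.card_le_univ ((insert a (G.neighborFinset a)) ∪ (insert b (G.neighborFinset b)))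
    omega
  -- degree of endpoint of a ≥5 geodesic is m
  have hend : ∀ a b : V, 5 ≤ G.dist a b → G.degree a = m := by
    intro a b h5
    have hne : G.dist a b ≠ 0 := by omega
    obtain ⟨p, hp⟩ := SimpleGraph.exists_walk_of_dist_ne_zero hne
    obtain ⟨q1, r1, hq1len, hqr1⟩ := walk_split p 3
    have hno : ∀ z : V, ¬((z = a ∨ G.Adj a z) ∧ (z = p.getVert 3 ∨ G.Adj (p.getVert 3) z)) := by
      rintro z ⟨h1, h2⟩
      obtain ⟨q, hq⟩ := hshort a (p.getVert 3) z h1 h2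
      have hle := SimpleGraph.dist_le (q.append r1)
      rw [Walk.length_append] at hle
      omega
    have hsum := hfar a (p.getVert 3) hno
    rcases hdegmem a with h | h
    · rcases hdegmem (p.getVert 3) with h' | h' <;> omega
    · exact h
  intro u v
  by_contra hcon
  push_neg at hcon
  have h5 : 5 ≤ G.dist u v := hcon
  have h5' : 5 ≤ G.dist v u := by rwa [SimpleGraph.dist_comm] at h5
  have hdu : G.degree u = m := hend u v h5
  have hdv : G.degree v = m := hend v u h5'
  rcases Nat.eq_zero_or_pos m with hm0 | hm1
  · -- m = 0 : u has degree 0 but lies on a nonnil walk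
    have hne : G.dist u v ≠ 0 := by omega
    obtain ⟨p, hp⟩ := SimpleGraph.exists_walk_of_dist_ne_zero hne
    have hadj : G.Adj u (p.getVert 1) := by
      have := p.adj_getVert_succ (i := 0) (by omega)
      simpa using this
    have : 0 < G.degree u := by
      rw [SimpleGraph.degree_pos_iff_exists_adj]
      exact ⟨_, hadj⟩
    omega
  · -- m ≥ 1 : there is a vertex of degree n
    have hnmem : (n : ℕ) ∈ degreeMultiset G := by
      rw [hdeg, Multiset.mem_add]
      exact Or.inl (Multiset.mem_replicate.mpr ⟨by omega, rfl⟩)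
    obtain ⟨w, _, hw⟩ := Multiset.mem_map.mp hnmem
    -- w cannot be close to both u and v
    have : (∀ z : V, ¬((z = u ∨ G.Adj u z) ∧ (z = w ∨ G.Adj w z))) ∨
        (∀ z : V, ¬((z = w ∨ G.Adj w z) ∧ (z = v ∨ G.Adj v z))) := by
      by_contra hboth
      push_neg at hboth
      obtain ⟨⟨z1, hz1⟩, ⟨z2, hz2⟩⟩ := hboth
      obtain ⟨q1, hq1⟩ := hshort u w z1 hz1.1 hz1.2
      obtain ⟨q2, hq2⟩ := hshort w v z2 hz2.1 hz2.2
      have hle := SimpleGraph.dist_le (q1.append q2)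
      rw [Walk.length_append] at hle
      omega
    rcases this with hno | hno
    · have := hfar u w hno; omega
    · have := hfar w v hno; omega

theorem stmt_13 (m n : ℕ) {V : Type} [Fintype V] (G : SimpleGraph V) [DecidableRel G.Adj]
    (hcard : Fintype.card V = m + n)
    (hdeg : degreeMultiset G = Multiset.replicate m n + Multiset.replicate n m)
    (hnotiso : IsEmpty (G ≃g completeBipartiteGraph (Fin m) (Fin n))) :
    ∀ u v : V, G.dist u v ≤ 4 := by
  rcases le_total m n with h | h
  · exact helper m n G h hcard hdeg
  · exact helper n m G h (by omega) (by rw [hdeg, add_comm])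
end

section
/- Let m and n be natural numbers with 4 ≤ m < n. Let G be the simple graph obtained from the disjoint union K_m ⊔ K_n as follows: delete an edge uv of K_m and an edge u'v' of K_n, and add the two edges uu' and vv'. Then G is Hamiltonian, i.e., G contains a cycle passing through every vertex exactly once. -/
open SimpleGraph

/-!
In `K_m` minus the edge `uv`, list `u`, then the other `m - 2` vertices, then `v`: consecutive
entries are adjacent, since `u` and `v` are never consecutive once `m ≥ 3`. This is a Hamiltonian
path from `u` to `v`; likewise there is one from `v'` to `u'` in `K_n` minus `u'v'`. The new edges
`vv'` and `u'u` join the two paths into a Hamiltonian cycle of `G`.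
-/

namespace SimpleGraph

variable {α : Type*} {u v : α}

lemma pairwise_adj_top_deleteEdges {l : List α} (hl : l.Nodup) (h : u ∉ l ∨ v ∉ l) :
    l.Pairwise ((⊤ : SimpleGraph α).deleteEdges {s(u, v)}).Adj := by
  refine hl.imp_of_mem fun hx hy hxy => ?_
  simp only [deleteEdges_adj, top_adj, Set.mem_singleton_iff, Sym2.eq_iff]
  refine ⟨hxy, ?_⟩
  rcases h with h | h <;> rintro (⟨rfl, rfl⟩ | ⟨rfl, rfl⟩) <;> contradiction

lemma exists_isHamiltonian_top_deleteEdges [Fintype α] [DecidableEq α] (huv : u ≠ v)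
    (hcard : 3 ≤ Fintype.card α) :
    ∃ p : ((⊤ : SimpleGraph α).deleteEdges {s(u, v)}).Walk u v, p.IsHamiltonian := by
  set A := ({u, v}ᶜ : Finset α).toList with hA
  have hAne : A ≠ [] := by
    rw [hA, ne_eq, Finset.toList_eq_nil, ← ne_eq, ← Finset.nonempty_iff_ne_empty,
      ← Finset.card_pos, Finset.card_compl, Finset.card_pair huv]
    omega
  have hmemA : ∀ x, x ∈ A ↔ x ≠ u ∧ x ≠ v := by simp [hA]
  have hnd : ([u] ++ A ++ [v]).Nodup := by
    simp [List.nodup_append, huv, Finset.nodup_toList, hA]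
  have hchain : ([u] ++ A ++ [v]).IsChain ((⊤ : SimpleGraph α).deleteEdges {s(u, v)}).Adj :=
    List.IsChain.append_overlap
      (pairwise_adj_top_deleteEdges (hnd.sublist (by simp))
        (.inr (by simp [hmemA, huv.symm]))).isChain
      (pairwise_adj_top_deleteEdges (hnd.sublist (by simp)) (.inl (by simp [hmemA, huv]))).isChain
      hAne
  obtain ⟨p, hp⟩ : ∃ p : ((⊤ : SimpleGraph α).deleteEdges {s(u, v)}).Walk u v,
      p.support = [u] ++ A ++ [v] :=
    ⟨(Walk.ofSupport _ (by simp) hchain).copy (by simp) (by simp),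
      (Walk.support_copy ..).trans (Walk.support_ofSupport ..)⟩
  refine ⟨p, Walk.IsPath.isHamiltonian_of_mem (Walk.isPath_def _ |>.mpr (hp ▸ hnd)) fun x => ?_⟩
  by_cases x = u <;> by_cases x = v <;> simp_all

namespace Walk

lemma IsHamiltonian.cons_isHamiltonianCycle {V : Type*} [DecidableEq V] {G : SimpleGraph V}
    {u v : V} {p : G.Walk v u} (hp : p.IsHamiltonian) (h : G.Adj u v) (hlen : 2 ≤ p.length) :
    (cons h p).IsHamiltonianCycle := by
  rw [isHamiltonianCycle_isCycle_and_isHamiltonian_tail, isCycle_iff_isPath_tail_and_le_length]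
  simp only [getVert_cons_succ, tail_cons, isPath_copy, length_cons]
  exact ⟨⟨hp.isPath, by omega⟩, fun x => by simpa using hp x⟩

lemma IsHamiltonian.exists_isHamiltonian_sum {β : Type*} [DecidableEq α] [DecidableEq β]
    {H₁ : SimpleGraph α} {H₂ : SimpleGraph β} {G : SimpleGraph (α ⊕ β)} {a b : α} {c d : β}
    {p : H₁.Walk a b} {q : H₂.Walk c d} (hp : p.IsHamiltonian) (hq : q.IsHamiltonian)
    (hle : H₁ ⊕g H₂ ≤ G) (h : G.Adj (.inl b) (.inr c)) :
    ∃ P : G.Walk (.inl a) (.inr d), P.IsHamiltonian := by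
  obtain ⟨p', hp'⟩ : ∃ p' : G.Walk (.inl a) (.inl b), p'.support = p.support.map .inl :=
    ⟨(p.map Embedding.sumInl.toHom).mapLe hle, (support_mapLe_eq_support ..).trans (support_map ..)⟩
  obtain ⟨q', hq'⟩ : ∃ q' : G.Walk (.inr c) (.inr d), q'.support = q.support.map .inr :=
    ⟨(q.map Embedding.sumInr.toHom).mapLe hle, (support_mapLe_eq_support ..).trans (support_map ..)⟩
  refine ⟨p'.append (cons h q'), ?_⟩
  rintro (x | y) <;>
    simp [support_append, hp', hq', List.count_map_of_injective, Sum.inl_injective,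
      Sum.inr_injective, hp _, hq _, List.count_eq_zero]

end Walk

end SimpleGraph

theorem stmt_18 (m n : ℕ) (hm : 4 ≤ m) (hmn : m < n)
    (u v : Fin m) (huv : u ≠ v) (u' v' : Fin n) (huv' : u' ≠ v')
    (G : SimpleGraph (Fin m ⊕ Fin n))
    (hG : G = ((cliqueSum m n).deleteEdges
        {s(Sum.inl u, Sum.inl v), s(Sum.inr u', Sum.inr v')} ⊔
      SimpleGraph.fromEdgeSet {s(Sum.inl u, Sum.inr u'), s(Sum.inl v, Sum.inr v')})) :
    ∃ (a : Fin m ⊕ Fin n) (p : G.Walk a a), p.IsHamiltonianCycle := by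
  obtain ⟨p, hp⟩ := exists_isHamiltonian_top_deleteEdges huv (by simp; omega)
  obtain ⟨q, hq⟩ := exists_isHamiltonian_top_deleteEdges huv'.symm (by simp; omega)
  have hle : (⊤ : SimpleGraph (Fin m)).deleteEdges {s(u, v)} ⊕g
      (⊤ : SimpleGraph (Fin n)).deleteEdges {s(v', u')} ≤ G := by
    subst hG
    rintro (x | x) (y | y) h <;> simp_all [cliqueSum, Sym2.eq_swap]
  obtain ⟨P, hP⟩ := hp.exists_isHamiltonian_sum hq hle (by simp [hG])
  exact ⟨_, _, hP.cons_isHamiltonianCycle (by simp [hG]) (by rw [hP.length_eq]; simp; omega)⟩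
end
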